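/- For p×p matrices H, R, P with R and P positive definite, and vectors y, x, s in ℝ^p, the product of Gaussian densities satisfies 𝒩(y; Hx, R) · 𝒩(x; s, P) = 𝒩(y; Hs, R + H P Hᵀ) · 𝒩(x; ŝ, P̂), where K = P Hᵀ (H P Hᵀ + R)⁻¹, ŝ = s + K(y − Hs), and P̂ = (I − K H) P. -/

import Mathlib

/-!
Writing `S = HPHᵀ + R` and `M = P⁻¹ + HᵀR⁻¹H`, the Kalman gain satisfies `MK = HᵀR⁻¹`, which
makes `(I − KH)P` the inverse of `M` and lets one complete the square in `x`:
`(y − Hx)ᵀR⁻¹(y − Hx) + (x − s)ᵀP⁻¹(x − s) = (y − Hs)ᵀS⁻¹(y − Hs) + (x − ŝ)ᵀM(x − ŝ)`.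
The normalising constants match by the Weinstein–Aronszajn identity
`det M = det S / (det P · det R)`.
-/

open Matrix
open scoped Real

/-- The multivariate Gaussian density
`𝒩(z; m, S) = (2π)^{-p/2} det(S)^{-1/2} exp(−½ (z−m)ᵀ S⁻¹ (z−m))`. -/
noncomputable def gaussDens (p : ℕ) (z m : Fin p → ℝ)
    (S : Matrix (Fin p) (Fin p) ℝ) : ℝ :=
  (2 * π) ^ (-(p : ℝ) / 2) * S.det ^ (-(1 : ℝ) / 2) *
    Real.exp (-(1 / 2) * ((z - m) ⬝ᵥ (S⁻¹ *ᵥ (z - m))))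

namespace Matrix

variable {𝕜 : Type*} [Field 𝕜] {m n : Type*} [Fintype m]

theorem IsSymm.transpose_mul_mul_same {A : Matrix m m 𝕜} (hA : A.IsSymm) (B : Matrix m n 𝕜) :
    (Bᵀ * A * B).IsSymm := by
  rw [IsSymm, transpose_mul, transpose_mul, transpose_transpose, hA.eq, Matrix.mul_assoc]

theorem IsSymm.dotProduct_mulVec_comm {A : Matrix m m 𝕜} (hA : A.IsSymm) (a b : m → 𝕜) :
    a ⬝ᵥ (A *ᵥ b) = b ⬝ᵥ (A *ᵥ a) := by
  simpa only [hA.eq] using dotProduct_transpose_mulVec A a b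

theorem IsSymm.dotProduct_sub_mulVec_sub {A : Matrix m m 𝕜} (hA : A.IsSymm) (a b : m → 𝕜) :
    (a - b) ⬝ᵥ (A *ᵥ (a - b)) = a ⬝ᵥ (A *ᵥ a) - 2 * (a ⬝ᵥ (A *ᵥ b)) + b ⬝ᵥ (A *ᵥ b) := by
  simp only [mulVec_sub, dotProduct_sub, sub_dotProduct, hA.dotProduct_mulVec_comm b a]
  ring

variable [Fintype n] [DecidableEq m]

noncomputable def kalmanGain (H : Matrix m n 𝕜) (R : Matrix m m 𝕜) (P : Matrix n n 𝕜) :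
    Matrix n m 𝕜 :=
  P * Hᵀ * (H * P * Hᵀ + R)⁻¹

variable {H : Matrix m n 𝕜} {R : Matrix m m 𝕜} {P : Matrix n n 𝕜}

theorem mul_kalmanGain (hS : IsUnit (H * P * Hᵀ + R).det) :
    H * kalmanGain H R P = 1 - R * (H * P * Hᵀ + R)⁻¹ := by
  rw [kalmanGain, ← Matrix.mul_assoc, ← Matrix.mul_assoc, eq_sub_iff_add_eq, ← Matrix.add_mul,
    mul_nonsing_inv _ hS]

variable [DecidableEq n]

theorem add_transpose_mul_inv_mul_mul_kalmanGain (hP : IsUnit P.det) (hR : IsUnit R.det)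
    (hS : IsUnit (H * P * Hᵀ + R).det) :
    (P⁻¹ + Hᵀ * R⁻¹ * H) * kalmanGain H R P = Hᵀ * R⁻¹ := by
  have key : (P⁻¹ + Hᵀ * R⁻¹ * H) * (P * Hᵀ) = Hᵀ * R⁻¹ * (H * P * Hᵀ + R) := by
    rw [Matrix.add_mul, Matrix.mul_add, nonsing_inv_mul_cancel_left _ _ hP,
      nonsing_inv_mul_cancel_right _ _ hR, add_comm]
    simp only [Matrix.mul_assoc]
  rw [kalmanGain, ← Matrix.mul_assoc, key, mul_nonsing_inv_cancel_right _ _ hS]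

theorem inv_one_sub_kalmanGain_mul_mul (hP : IsUnit P.det) (hR : IsUnit R.det)
    (hS : IsUnit (H * P * Hᵀ + R).det) :
    ((1 - kalmanGain H R P * H) * P)⁻¹ = P⁻¹ + Hᵀ * R⁻¹ * H := by
  refine inv_eq_left_inv ?_
  rw [← Matrix.mul_assoc, Matrix.mul_sub, Matrix.mul_one, ← Matrix.mul_assoc,
    add_transpose_mul_inv_mul_mul_kalmanGain hP hR hS, add_sub_cancel_right, nonsing_inv_mul _ hP]

theorem det_add_transpose_mul_inv_mul (hP : IsUnit P.det) (hR : IsUnit R.det) :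
    (P⁻¹ + Hᵀ * R⁻¹ * H).det = (H * P * Hᵀ + R).det / (P.det * R.det) := by
  have hRS : 1 + R⁻¹ * H * P⁻¹⁻¹ * Hᵀ = R⁻¹ * (H * P * Hᵀ + R) := by
    rw [nonsing_inv_nonsing_inv P hP, Matrix.mul_add, nonsing_inv_mul _ hR, add_comm]
    simp only [Matrix.mul_assoc]
  rw [Matrix.mul_assoc, det_add_mul _ _ (isUnit_nonsing_inv_det P hP), hRS, det_mul]
  simp only [det_nonsing_inv, Ring.inverse_eq_inv']
  ring

theorem det_one_sub_kalmanGain_mul_mul (hP : IsUnit P.det) (hR : IsUnit R.det)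
    (hS : IsUnit (H * P * Hᵀ + R).det) :
    ((1 - kalmanGain H R P * H) * P).det = P.det * R.det / (H * P * Hᵀ + R).det := by
  have h := congrArg det (inv_one_sub_kalmanGain_mul_mul hP hR hS)
  rw [det_nonsing_inv, Ring.inverse_eq_inv', det_add_transpose_mul_inv_mul hP hR] at h
  rw [← inv_div, ← h, inv_inv]

theorem kalman_complete_square (hP : IsUnit P.det) (hR : IsUnit R.det)
    (hS : IsUnit (H * P * Hᵀ + R).det) (hPs : P.IsSymm) (hRs : R.IsSymm) (y : m → 𝕜)
    (x s : n → 𝕜) :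
    (y - H *ᵥ x) ⬝ᵥ (R⁻¹ *ᵥ (y - H *ᵥ x)) + (x - s) ⬝ᵥ (P⁻¹ *ᵥ (x - s)) =
      (y - H *ᵥ s) ⬝ᵥ ((H * P * Hᵀ + R)⁻¹ *ᵥ (y - H *ᵥ s)) +
        (x - (s + kalmanGain H R P *ᵥ (y - H *ᵥ s))) ⬝ᵥ
          ((P⁻¹ + Hᵀ * R⁻¹ * H) *ᵥ (x - (s + kalmanGain H R P *ᵥ (y - H *ᵥ s)))) := by
  set K := kalmanGain H R P
  set S := H * P * Hᵀ + R
  set M := P⁻¹ + Hᵀ * R⁻¹ * H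
  set u := x - s
  set v := y - H *ᵥ s
  have hM : M.IsSymm := hPs.inv.add (hRs.inv.transpose_mul_mul_same H)
  have hMK : M * K = Hᵀ * R⁻¹ := add_transpose_mul_inv_mul_mul_kalmanGain hP hR hS
  have quad_M : u ⬝ᵥ (M *ᵥ u) = u ⬝ᵥ (P⁻¹ *ᵥ u) + (H *ᵥ u) ⬝ᵥ (R⁻¹ *ᵥ (H *ᵥ u)) := by
    rw [add_mulVec, dotProduct_add, ← mulVec_mulVec, ← mulVec_mulVec, dotProduct_transpose_mulVec,
      dotProduct_comm (R⁻¹ *ᵥ H *ᵥ u)]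
  have cross (w : n → 𝕜) : w ⬝ᵥ (M *ᵥ (K *ᵥ v)) = (H *ᵥ w) ⬝ᵥ (R⁻¹ *ᵥ v) := by
    rw [mulVec_mulVec, hMK, ← mulVec_mulVec, dotProduct_transpose_mulVec, dotProduct_comm]
  have quad_K : (K *ᵥ v) ⬝ᵥ (M *ᵥ (K *ᵥ v)) = v ⬝ᵥ (R⁻¹ *ᵥ v) - v ⬝ᵥ (S⁻¹ *ᵥ v) := by
    rw [cross, mulVec_mulVec, mul_kalmanGain hS, sub_mulVec, one_mulVec,
      sub_dotProduct, ← mulVec_mulVec, dotProduct_comm (R *ᵥ _), hRs.dotProduct_mulVec_comm,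
      mulVec_mulVec, mul_nonsing_inv _ hR, one_mulVec, dotProduct_comm (S⁻¹ *ᵥ v)]
  have hyx : y - H *ᵥ x = v - H *ᵥ u := by
    simp only [u, v, mulVec_sub]
    abel
  have hxs : x - (s + K *ᵥ v) = u - K *ᵥ v := by
    simp only [u]
    abel
  rw [hyx, hxs, hRs.inv.dotProduct_sub_mulVec_sub, hM.dotProduct_sub_mulVec_sub, quad_M, cross,
    quad_K, hRs.inv.dotProduct_mulVec_comm v (H *ᵥ u)]
  ring

end Matrix

theorem gaussDens_mul_gaussDens {p : ℕ} {z₁ m₁ z₂ m₂ : Fin p → ℝ}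
    {S₁ S₂ : Matrix (Fin p) (Fin p) ℝ} (h₁ : 0 ≤ S₁.det) (h₂ : 0 ≤ S₂.det) :
    gaussDens p z₁ m₁ S₁ * gaussDens p z₂ m₂ S₂ =
      (2 * π) ^ (-(p : ℝ) / 2) * (2 * π) ^ (-(p : ℝ) / 2) * (S₁.det * S₂.det) ^ (-(1 : ℝ) / 2) *
        Real.exp (-(1 / 2) * ((z₁ - m₁) ⬝ᵥ (S₁⁻¹ *ᵥ (z₁ - m₁)) +
          (z₂ - m₂) ⬝ᵥ (S₂⁻¹ *ᵥ (z₂ - m₂)))) := by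
  rw [gaussDens, gaussDens, Real.mul_rpow h₁ h₂, mul_add, Real.exp_add]
  ring

/-- **Gaussian product lemma.** For `p×p` matrices `H, R, P` with `R` and `P`
positive definite, and vectors `y, x, s ∈ ℝᵖ`,
`𝒩(y; Hx, R) · 𝒩(x; s, P) = 𝒩(y; Hs, R + HPHᵀ) · 𝒩(x; ŝ, P̂)`, where
`K = PHᵀ(HPHᵀ + R)⁻¹`, `ŝ = s + K(y − Hs)`, and `P̂ = (I − KH)P`. -/
theorem gauss_product {p : ℕ} (H R P : Matrix (Fin p) (Fin p) ℝ)
    (hR : R.PosDef) (hP : P.PosDef)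
    (y x s : Fin p → ℝ)
    (K : Matrix (Fin p) (Fin p) ℝ)
    (hK : K = P * Hᵀ * (H * P * Hᵀ + R)⁻¹) :
    gaussDens p y (H *ᵥ x) R * gaussDens p x s P
      = gaussDens p y (H *ᵥ s) (R + H * P * Hᵀ) *
        gaussDens p x (s + K *ᵥ (y - H *ᵥ s)) ((1 - K * H) * P) := by
  obtain rfl : K = kalmanGain H R P := hK
  have hHPH : (H * P * Hᵀ).PosSemidef := by
    simpa only [conjTranspose_eq_transpose_of_trivial] using
      hP.posSemidef.mul_mul_conjTranspose_same H
  have hS : (H * P * Hᵀ + R).PosDef := PosDef.posSemidef_add hHPH hR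
  have hPu : IsUnit P.det := hP.det_pos.ne'.isUnit
  have hRu : IsUnit R.det := hR.det_pos.ne'.isUnit
  have hSu : IsUnit (H * P * Hᵀ + R).det := hS.det_pos.ne'.isUnit
  have hdet := det_one_sub_kalmanGain_mul_mul hPu hRu hSu
  have hpost : 0 < ((1 - kalmanGain H R P * H) * P).det := by
    rw [hdet]
    exact div_pos (mul_pos hP.det_pos hR.det_pos) hS.det_pos
  rw [add_comm R, gaussDens_mul_gaussDens hR.det_pos.le hP.det_pos.le,
    gaussDens_mul_gaussDens hS.det_pos.le hpost.le, inv_one_sub_kalmanGain_mul_mul hPu hRu hSu,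
    kalman_complete_square hPu hRu hSu (isHermitian_iff_isSymm.mp hP.isHermitian)
      (isHermitian_iff_isSymm.mp hR.isHermitian), hdet, mul_div_cancel₀ _ hS.det_pos.ne',
    mul_comm R.det]
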